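/- Fix integers 0 ≤ j < i ≤ n and set T_{i,j} := {(x_0, x) ∈ ℝ × ℝⁿ : h_{i,j}(x) = 0}. Then ⁿΓ_i ∩ T_{i,j} = ⁿΓ_j ∩ T_{i,j} (i.e. for every x with h_{i,j}(x) = 0 one has h_i(x)² = h_j(x)²), and moreover ∇(h_i²)(x) = ∇(h_j²)(x) at every such x. Thus the primary tangency locus of the graphs ⁿΓ_i and ⁿΓ_j coincides with the intersection of either graph with T_{i,j}. -/

import Mathlib

open scoped ContDiff

noncomputable section

/-- The polynomial `h_i` in the variables `x_1, …, x_i` (0-indexed: it depends on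
coordinates `0, …, i-1`): `h_0 = 0`, `h_{i+1}(x) = x 0 - (h_i (x ∘ (·+1)))^2`. -/
def hpoly : ℕ → (ℕ → ℝ) → ℝ
  | 0, _ => 0
  | i + 1, x => x 0 - (hpoly i fun k => x (k + 1)) ^ 2

/-- Extension of a vector of `ℝⁿ` by zeros to an infinite sequence. -/
def extv {n : ℕ} (x : Fin n → ℝ) : ℕ → ℝ := fun k => if h : k < n then x ⟨k, h⟩ else 0

/-- `h_{i,j}` as a function on `ℝⁿ` (0-indexed: it depends on coordinates `j, …, i-1`;
in the paper's notation `h_{i,j}(x) = h_{i-j}(x_{j+1}, …, x_i)`). -/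
def hh (n i j : ℕ) (x : Fin n → ℝ) : ℝ := hpoly (i - j) fun k => extv x (j + k)

/-- The gradient of a function on `ℝⁿ`, via the Fréchet derivative. -/
def grad {n : ℕ} (f : (Fin n → ℝ) → ℝ) (x : Fin n → ℝ) : Fin n → ℝ :=
  fun k => fderiv ℝ f x (Pi.single k 1)

/-- The `m`-th standard basis vector of `ℝⁿ` (zero if `m ≥ n`). -/
def evec (n m : ℕ) : Fin n → ℝ := fun k => if (k : ℕ) = m then 1 else 0

/-! For `k < j` both `h_{i,k}` and `h_{j,k}` obey the recursion `h_{·,k} = x_k - h_{·,k+1}²`.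
At a point where `h_{i,j}` vanishes, `h_{i,j}²` and `h_{j,j}² = 0` both have value and
differential zero there, and agreement to first order at a point survives both `f ↦ x_k - f` and
`f ↦ f²`; descending from `k = j` to `k = 0` gives `h_i²` and `h_j²` the same value and gradient. -/

section TangentAt

variable {E : Type*} [NormedAddCommGroup E] [NormedSpace ℝ E]

def TangentAt (f g : E → ℝ) (x : E) : Prop :=
  f x = g x ∧ ∃ f' : E →L[ℝ] ℝ, HasFDerivAt f f' x ∧ HasFDerivAt g f' x

variable {f g u : E → ℝ} {x : E}

theorem TangentAt.fderiv_eq (h : TangentAt f g x) : fderiv ℝ f x = fderiv ℝ g x := by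
  obtain ⟨-, f', hf, hg⟩ := h
  rw [hf.fderiv, hg.fderiv]

theorem TangentAt.sq (h : TangentAt f g x) :
    TangentAt (fun y => f y ^ 2) (fun y => g y ^ 2) x := by
  obtain ⟨hfg, f', hf, hg⟩ := h
  refine ⟨congrArg (· ^ 2) hfg, _, hf.pow 2, ?_⟩
  rw [hfg]
  exact hg.pow 2

theorem TangentAt.sub_left {u' : E →L[ℝ] ℝ} (hu : HasFDerivAt u u' x) (h : TangentAt f g x) :
    TangentAt (fun y => u y - f y) (fun y => u y - g y) x := by
  obtain ⟨hfg, f', hf, hg⟩ := h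
  exact ⟨congrArg (u x - ·) hfg, _, hu.fun_sub hf, hu.fun_sub hg⟩

theorem tangentAt_sq_of_eq_zero (hf : DifferentiableAt ℝ f x) (hg : DifferentiableAt ℝ g x)
    (hf₀ : f x = 0) (hg₀ : g x = 0) :
    TangentAt (fun y => f y ^ 2) (fun y => g y ^ 2) x := by
  refine ⟨show f x ^ 2 = g x ^ 2 by rw [hf₀, hg₀], 0, ?_, ?_⟩
  · simpa [hf₀] using hf.hasFDerivAt.pow 2
  · simpa [hg₀] using hg.hasFDerivAt.pow 2

end TangentAt

theorem differentiable_hpoly {E : Type*} [NormedAddCommGroup E] [NormedSpace ℝ E] (m : ℕ)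
    {v : E → ℕ → ℝ} (hv : ∀ k, Differentiable ℝ fun y => v y k) :
    Differentiable ℝ fun y => hpoly m (v y) := by
  induction m generalizing v with
  | zero => exact differentiable_const 0
  | succ m ih => exact (hv 0).sub ((ih fun k => hv (k + 1)).pow 2)

theorem differentiable_extv (n k : ℕ) : Differentiable ℝ fun x : Fin n → ℝ => extv x k := by
  unfold extv
  split_ifs
  · exact differentiable_apply _
  · exact differentiable_const 0

theorem differentiable_hh (n i j : ℕ) : Differentiable ℝ (hh n i j) :=
  differentiable_hpoly _ fun k => differentiable_extv n (j + k)

theorem hh_of_le {n i j : ℕ} (h : i ≤ j) (x : Fin n → ℝ) : hh n i j x = 0 := by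
  simp [hh, Nat.sub_eq_zero_of_le h, hpoly]

theorem hh_eq_sub_sq {n i j : ℕ} (h : j < i) (x : Fin n → ℝ) :
    hh n i j x = extv x j - hh n i (j + 1) x ^ 2 := by
  obtain ⟨m, hm⟩ : ∃ m, i - j = m + 1 := ⟨i - (j + 1), by omega⟩
  rw [hh, hh, hm, show i - (j + 1) = m by omega, hpoly]
  simp only [Nat.add_zero, Nat.add_assoc, Nat.add_comm 1]

theorem tangentAt_sq_hh {n i j : ℕ} (hji : j ≤ i) {x : Fin n → ℝ} (hx : hh n i j x = 0)
    {k : ℕ} (hk : k ≤ j) :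
    TangentAt (fun y => hh n i k y ^ 2) (fun y => hh n j k y ^ 2) x := by
  induction hk using Nat.decreasingInduction with
  | self =>
    exact tangentAt_sq_of_eq_zero (differentiable_hh n i j x) (differentiable_hh n j j x) hx
      (hh_of_le le_rfl x)
  | of_succ k hk ih =>
    have hrec : ∀ l, k < l → hh n l k = fun y => extv y k - hh n l (k + 1) y ^ 2 :=
      fun l hl => funext (hh_eq_sub_sq hl)
    rw [hrec i (by omega), hrec j hk]
    exact (ih.sub_left (differentiable_extv n k x).hasFDerivAt).sq

theorem stmt_10_general (n i j : ℕ) (hji : j < i) :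
    ({z : ℝ × (Fin n → ℝ) | z.1 = (hh n i 0 z.2) ^ 2 ∧ hh n i j z.2 = 0}
      = {z : ℝ × (Fin n → ℝ) | z.1 = (hh n j 0 z.2) ^ 2 ∧ hh n i j z.2 = 0}) ∧
    (∀ x : Fin n → ℝ, hh n i j x = 0 →
      (hh n i 0 x) ^ 2 = (hh n j 0 x) ^ 2 ∧
      grad (fun y => (hh n i 0 y) ^ 2) x = grad (fun y => (hh n j 0 y) ^ 2) x) := by
  have htan : ∀ x, hh n i j x = 0 →
      TangentAt (fun y => hh n i 0 y ^ 2) (fun y => hh n j 0 y ^ 2) x :=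
    fun x hx => tangentAt_sq_hh hji.le hx (Nat.zero_le j)
  have hsq : ∀ x, hh n i j x = 0 → hh n i 0 x ^ 2 = hh n j 0 x ^ 2 := fun x hx => (htan x hx).1
  refine ⟨?_, fun x hx => ⟨hsq x hx, ?_⟩⟩
  · ext ⟨t, x⟩
    exact and_congr_left fun hx => by rw [hsq x hx]
  · funext k
    simp only [grad, (htan x hx).fderiv_eq]

/-- Fix `0 ≤ j < i ≤ n` and `T_{i,j} = {(x_0, x) : h_{i,j}(x) = 0}`.  Then
`ⁿΓ_i ∩ T_{i,j} = ⁿΓ_j ∩ T_{i,j}` (i.e. `h_{i,j}(x) = 0` implies `h_i(x)² = h_j(x)²`), and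
moreover `∇(h_i²)(x) = ∇(h_j²)(x)` at every such `x`; thus the primary tangency locus of the
graphs `ⁿΓ_i` and `ⁿΓ_j` coincides with the intersection of either graph with `T_{i,j}`. -/
theorem stmt_10 (n i j : ℕ) (hji : j < i) (hin : i ≤ n) :
    ({z : ℝ × (Fin n → ℝ) | z.1 = (hh n i 0 z.2) ^ 2 ∧ hh n i j z.2 = 0}
      = {z : ℝ × (Fin n → ℝ) | z.1 = (hh n j 0 z.2) ^ 2 ∧ hh n i j z.2 = 0}) ∧
    (∀ x : Fin n → ℝ, hh n i j x = 0 →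
      (hh n i 0 x) ^ 2 = (hh n j 0 x) ^ 2 ∧
      grad (fun y => (hh n i 0 y) ^ 2) x = grad (fun y => (hh n j 0 y) ^ 2) x) :=
  stmt_10_general n i j hji
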